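/- arXiv:1712.03578 — 2 statements merged into one kernel-verified Lean document; each statement's English description precedes it below -/
import Mathlib

section
/- Given A, Ā, B with B of full column rank, the stationary Lyapunov equation (A − BB'Π)Σ + Σ(A − BB'Π)' + BB' = 0 has a symmetric solution Π if and only if AΣ + ΣA' lies in the range of the map f_B : X ↦ BX' + XB' from ℝ^{n×m} to symmetric n×n matrices. -/
/-! With `Z = ΣΠB − B/2`, the closed-loop Lyapunov residual equals `AΣ + ΣAᵀ − f_B(Z)`, which
gives one direction at once. Conversely, since `f_B(BT) = 0` for skew `T`, it suffices to find a
symmetric `Π` with `ΣΠB = X + B/2 + BT`. As `B` has a left inverse, a symmetric `Π` with `ΠB = W`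
exists as soon as `BᵀW` is symmetric; for `W = Σ⁻¹(X + B/2 + BT)` this is the Sylvester equation
`GT + TG = Nᵀ − N` with `G = BᵀΣ⁻¹B` positive definite, whose unique solution is skew. -/

open Matrix

namespace Matrix

theorem mulVec_injective_iff_rank_eq_card {K m n : Type*} [Field K] [Fintype n]
    {A : Matrix m n K} : Function.Injective A.mulVec ↔ A.rank = Fintype.card n := by
  rw [mulVec_injective_iff, linearIndependent_iff_card_eq_finrank_span,
    rank_eq_finrank_span_cols, eq_comm]
  rfl

open scoped ComplexOrder

section Sylvester

variable {𝕜 ι : Type*} [RCLike 𝕜] [Fintype ι] {G : Matrix ι ι 𝕜}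

/-- If `GT = -TG` then `tr(TᴴGT) = -tr(TGTᴴ)`, and both are traces of positive semidefinite
matrices. -/
theorem PosDef.eq_zero_of_mul_add_mul_eq_zero (hG : G.PosDef) {T : Matrix ι ι 𝕜}
    (h : G * T + T * G = 0) : T = 0 := by
  have htr : (Tᴴ * G * T).trace + (T * G * Tᴴ).trace = 0 := by
    rw [Matrix.mul_assoc, trace_mul_comm, eq_neg_of_add_eq_zero_left h, Matrix.neg_mul,
      trace_neg, neg_add_cancel]
  have hzero : Tᴴ * G * T = 0 :=
    (hG.posSemidef.conjTranspose_mul_mul_same T).trace_eq_zero_iff.1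
      ((add_eq_zero_iff_of_nonneg (hG.posSemidef.conjTranspose_mul_mul_same T).trace_nonneg
        (hG.posSemidef.mul_mul_conjTranspose_same T).trace_nonneg).1 htr).1
  refine ext_iff_mulVec.2 fun x => by_contra fun hx => ?_
  have := hG.dotProduct_mulVec_pos (x := T *ᵥ x) (by simpa using hx)
  rw [star_mulVec, ← dotProduct_mulVec, mulVec_mulVec, mulVec_mulVec, hzero, zero_mulVec,
    dotProduct_zero] at this
  exact this.false

theorem PosDef.exists_mul_add_mul_eq (hG : G.PosDef) (C : Matrix ι ι 𝕜) :
    ∃ T, G * T + T * G = C := by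
  let φ : Matrix ι ι 𝕜 →ₗ[𝕜] Matrix ι ι 𝕜 := LinearMap.mulLeft 𝕜 G + LinearMap.mulRight 𝕜 G
  have hφ : Function.Injective φ :=
    (injective_iff_map_eq_zero φ).2 fun _ => hG.eq_zero_of_mul_add_mul_eq_zero
  exact LinearMap.injective_iff_surjective.1 hφ C

theorem PosDef.exists_skewHermitian_mul_add_mul_eq (hG : G.PosDef) {C : Matrix ι ι 𝕜}
    (hC : Cᴴ = -C) : ∃ T, Tᴴ = -T ∧ G * T + T * G = C := by
  obtain ⟨T, hT⟩ := hG.exists_mul_add_mul_eq C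
  refine ⟨T, ?_, hT⟩
  have hT' : G * Tᴴ + Tᴴ * G = -C := by
    simpa [conjTranspose_add, conjTranspose_mul, hG.1.eq, hC, add_comm] using
      congrArg (·ᴴ) hT
  refine eq_neg_of_add_eq_zero_left (hG.eq_zero_of_mul_add_mul_eq_zero ?_)
  rw [Matrix.mul_add, Matrix.add_mul, add_add_add_comm, hT, hT', neg_add_cancel]

end Sylvester

theorem exists_isHermitian_mul_eq {R m n : Type*} [Ring R] [StarRing R] [Fintype m] [Fintype n]
    [DecidableEq n] {B : Matrix m n R} {L : Matrix n m R} (hLB : L * B = 1) {W : Matrix m n R}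
    (hW : (Bᴴ * W).IsHermitian) : ∃ P : Matrix m m R, P.IsHermitian ∧ P * B = W := by
  have hWB : Wᴴ * B = Bᴴ * W := by
    rw [← hW.eq, conjTranspose_mul, conjTranspose_conjTranspose]
  set M := Bᴴ * W
  refine ⟨W * L + Lᴴ * Wᴴ - Lᴴ * M * L, ?_, ?_⟩
  · simp only [IsHermitian, conjTranspose_sub, conjTranspose_add, conjTranspose_mul,
      conjTranspose_conjTranspose, hW.eq, Matrix.mul_assoc]
    abel
  · simp only [Matrix.sub_mul, Matrix.add_mul, Matrix.mul_assoc, hLB, Matrix.mul_one, hWB]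
    abel

variable {𝕜 ι κ : Type*} [RCLike 𝕜] [Fintype ι] [Fintype κ] [DecidableEq ι] [DecidableEq κ]

theorem PosDef.exists_isHermitian_mul_mul_eq_add_mul_skew {S : Matrix ι ι 𝕜} (hS : S.PosDef)
    {B : Matrix ι κ 𝕜} (hB : Function.Injective B.mulVec) (Y : Matrix ι κ 𝕜) :
    ∃ P : Matrix ι ι 𝕜, P.IsHermitian ∧ ∃ T : Matrix κ κ 𝕜, Tᴴ = -T ∧ S * P * B = Y + B * T := by
  set G := Bᴴ * S⁻¹ * B
  have hG : G.PosDef := hS.inv.conjTranspose_mul_mul_same hB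
  set N := Bᴴ * S⁻¹ * Y
  obtain ⟨T, hTskew, hT⟩ :=
    hG.exists_skewHermitian_mul_add_mul_eq (C := Nᴴ - N) (by simp [conjTranspose_sub])
  have hW : (Bᴴ * (S⁻¹ * (Y + B * T))).IsHermitian := by
    have hBW : Bᴴ * (S⁻¹ * (Y + B * T)) = N + G * T := by
      simp only [N, G, Matrix.mul_add, Matrix.mul_assoc]
    rw [IsHermitian, hBW, conjTranspose_add, conjTranspose_mul G, hG.1.eq, hTskew, Matrix.neg_mul]
    linear_combination (norm := abel) -hT
  have hLB : G⁻¹ * Bᴴ * S⁻¹ * B = 1 := by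
    rw [Matrix.mul_assoc (G⁻¹ * Bᴴ), Matrix.mul_assoc G⁻¹, ← Matrix.mul_assoc Bᴴ,
      nonsing_inv_mul _ ((isUnit_iff_isUnit_det G).1 hG.isUnit)]
  obtain ⟨P, hP, hPB⟩ := exists_isHermitian_mul_eq hLB hW
  refine ⟨P, hP, T, hTskew, ?_⟩
  rw [Matrix.mul_assoc, hPB,
    mul_nonsing_inv_cancel_left _ _ ((isUnit_iff_isUnit_det S).1 hS.isUnit)]

theorem lyapunov_closedLoop_eq {R ι κ : Type*} [CommRing R] [Invertible (2 : R)] [Fintype ι]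
    [Fintype κ] {A S P : Matrix ι ι R} (B : Matrix ι κ R) (hS : Sᵀ = S) (hP : Pᵀ = P) :
    (A - B * Bᵀ * P) * S + S * (A - B * Bᵀ * P)ᵀ + B * Bᵀ =
      A * S + S * Aᵀ - (B * (S * P * B - ⅟(2 : R) • B)ᵀ + (S * P * B - ⅟(2 : R) • B) * Bᵀ) := by
  simp only [transpose_sub, transpose_mul, transpose_smul, transpose_transpose, hS, hP,
    Matrix.sub_mul, Matrix.mul_sub, Matrix.mul_smul, Matrix.smul_mul, Matrix.mul_assoc]
  have h2 : (⅟2 + ⅟2 : R) = 1 := invOf_two_add_invOf_two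
  linear_combination (norm := module) -(h2 • (B * Bᵀ : Matrix ι ι R))

theorem mul_transpose_add_mul_transpose_add_mul_skew {R ι κ : Type*} [CommRing R] [Fintype κ]
    {T : Matrix κ κ R} (hT : Tᵀ = -T) (B X : Matrix ι κ R) :
    B * (X + B * T)ᵀ + (X + B * T) * Bᵀ = B * Xᵀ + X * Bᵀ := by
  simp only [transpose_add, transpose_mul, hT, Matrix.mul_add, Matrix.add_mul, Matrix.mul_neg,
    Matrix.neg_mul, Matrix.mul_assoc]
  abel

end Matrix

theorem stmt_12_general {n m : ℕ} (A : Matrix (Fin n) (Fin n) ℝ) (B : Matrix (Fin n) (Fin m) ℝ)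
    (S : Matrix (Fin n) (Fin n) ℝ) (hS : S.PosDef)
    (hB : B.rank = m) :
    (∃ P : Matrix (Fin n) (Fin n) ℝ, Pᵀ = P ∧
      (A - B * Bᵀ * P) * S + S * (A - B * Bᵀ * P)ᵀ + B * Bᵀ = 0)
    ↔ (∃ X : Matrix (Fin n) (Fin m) ℝ, A * S + S * Aᵀ = B * Xᵀ + X * Bᵀ) := by
  have hSsym : Sᵀ = S := by simpa using hS.isHermitian.eq
  refine ⟨fun ⟨P, hP, h⟩ => ⟨S * P * B - ⅟(2 : ℝ) • B, ?_⟩, fun ⟨X, hX⟩ => ?_⟩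
  · rwa [lyapunov_closedLoop_eq B hSsym hP, sub_eq_zero] at h
  have hBinj : Function.Injective B.mulVec := by
    rw [mulVec_injective_iff_rank_eq_card, hB, Fintype.card_fin]
  obtain ⟨P, hP, T, hT, hSPB⟩ :=
    hS.exists_isHermitian_mul_mul_eq_add_mul_skew hBinj (X + ⅟(2 : ℝ) • B)
  rw [IsHermitian, conjTranspose_eq_transpose_of_trivial] at hP
  rw [conjTranspose_eq_transpose_of_trivial] at hT
  have hZ : S * P * B - ⅟(2 : ℝ) • B = X + B * T := by rw [hSPB]; abel
  refine ⟨P, hP, ?_⟩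
  rw [lyapunov_closedLoop_eq B hSsym hP, hZ,
    mul_transpose_add_mul_transpose_add_mul_skew hT, hX, sub_self]

/-- For `Σ` symmetric positive definite and `B` of full column rank, the
stationary Lyapunov equation `(A − BBᵀΠ)Σ + Σ(A − BBᵀΠ)ᵀ + BBᵀ = 0` has a symmetric
solution `Π` if and only if `AΣ + ΣAᵀ` lies in the range of the map
`f_B : X ↦ BXᵀ + XBᵀ`. -/
theorem stmt_12 {n m : ℕ} (A : Matrix (Fin n) (Fin n) ℝ) (B : Matrix (Fin n) (Fin m) ℝ)
    (S : Matrix (Fin n) (Fin n) ℝ) (hS : S.PosDef) (hSsym : Sᵀ = S)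
    (hB : B.rank = m) :
    (∃ P : Matrix (Fin n) (Fin n) ℝ, Pᵀ = P ∧
      (A - B * Bᵀ * P) * S + S * (A - B * Bᵀ * P)ᵀ + B * Bᵀ = 0)
    ↔ (∃ X : Matrix (Fin n) (Fin m) ℝ, A * S + S * Aᵀ = B * Xᵀ + X * Bᵀ) :=
  stmt_12_general A B S hS hB
end

section
/- Let λ(x) = −(1/2)x'Πx + n'x with Π symmetric. If Π satisfies (A−BB'Π)Σ + Σ(A−BB'Π)' + BB' = 0 and (A+Ā−BB'Π)m + BB'n = 0, then the Gaussian density ρ* = N(m,Σ) is a stationary solution of the Fokker–Planck equation ∇·((Ax + Ā m + BB'∇λ)ρ*) − (1/2)tr(BB'∇²ρ*) = 0. -/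
/-!
Write `u = x - m`, `M = Σ⁻¹` and `K = A - BBᵀΠ`. The mean condition turns the drift
into `K u`, so both terms of the Fokker–Planck operator are `ρ*` times a quadratic polynomial
in `u`: the divergence term is `ρ* (tr K - (M u)ᵀ K u)` and the diffusion term is
`ρ* ((M u)ᵀ BBᵀ (M u) - tr (BBᵀ M))`. Conjugating the Lyapunov equation
`K Σ + Σ Kᵀ + BBᵀ = 0` by `M` gives `(M u)ᵀ BBᵀ (M u) = -2 (M u)ᵀ K u` and
`tr (BBᵀ M) = -2 tr K`, and the two terms cancel.
-/

open Matrix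

noncomputable section

/-- A Euclidean vector viewed as a plain vector (for matrix-vector algebra). -/
def toV {n : ℕ} (v : EuclideanSpace ℝ (Fin n)) : Fin n → ℝ := fun i => v i

/-- The Hessian matrix (in the space variable) of `f : ℝⁿ → ℝ`. -/
def hess {n : ℕ} (f : EuclideanSpace ℝ (Fin n) → ℝ) (x : EuclideanSpace ℝ (Fin n)) :
    Matrix (Fin n) (Fin n) ℝ :=
  Matrix.of fun i j => (fderiv ℝ (gradient f) x (EuclideanSpace.single j 1)) i

/-- Divergence `∇·F` of a vector field `F : ℝⁿ → ℝⁿ`. -/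
def dive {n : ℕ} (F : EuclideanSpace ℝ (Fin n) → Fin n → ℝ)
    (x : EuclideanSpace ℝ (Fin n)) : ℝ :=
  ∑ i, fderiv ℝ (fun y => F y i) x (EuclideanSpace.single i 1)

section LinearAlgebra

variable {ι R : Type*} [Fintype ι] [CommRing R]

theorem drift_eq_mulVec_sub (A Abar Q P : Matrix ι ι R) (mv nv y : ι → R)
    (hMean : (A + Abar - Q * P) *ᵥ mv + Q *ᵥ nv = 0) :
    A *ᵥ y + Abar *ᵥ mv + Q *ᵥ (-(P *ᵥ y) + nv) = (A - Q * P) *ᵥ (y - mv) := by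
  simp only [add_mulVec, sub_mulVec, mulVec_sub, mulVec_add, mulVec_neg, mulVec_mulVec]
    at hMean ⊢
  linear_combination hMean

theorem dotProduct_mulVec_eq_of_lyapunov {K S Q : Matrix ι ι R} (hS : S.IsSymm)
    (h : K * S + S * Kᵀ + Q = 0) (w : ι → R) :
    w ⬝ᵥ Q *ᵥ w = -2 * (w ⬝ᵥ K *ᵥ (S *ᵥ w)) := by
  have hQ : Q = -(K * S + S * Kᵀ) := eq_neg_of_add_eq_zero_right h
  have hsymm : w ⬝ᵥ (S * Kᵀ) *ᵥ w = w ⬝ᵥ K *ᵥ (S *ᵥ w) :=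
    calc w ⬝ᵥ (S * Kᵀ) *ᵥ w
        = w ⬝ᵥ Sᵀ *ᵥ (Kᵀ *ᵥ w) := by rw [hS.eq, mulVec_mulVec]
      _ = (S *ᵥ w) ⬝ᵥ Kᵀ *ᵥ w := by rw [dotProduct_transpose_mulVec, dotProduct_comm]
      _ = w ⬝ᵥ K *ᵥ (S *ᵥ w) := dotProduct_transpose_mulVec _ _ _
  rw [hQ, neg_mulVec, add_mulVec, dotProduct_neg, dotProduct_add, hsymm, ← mulVec_mulVec]
  ring

theorem trace_mul_inv_eq_of_lyapunov [DecidableEq ι] {K S Q : Matrix ι ι R}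
    (hS : IsUnit S.det) (h : K * S + S * Kᵀ + Q = 0) :
    (Q * S⁻¹).trace = -2 * K.trace := by
  have hQ : Q = -(K * S + S * Kᵀ) := eq_neg_of_add_eq_zero_right h
  rw [hQ, Matrix.neg_mul, trace_neg, Matrix.add_mul, Matrix.mul_assoc, mul_nonsing_inv S hS,
    Matrix.mul_one, trace_add, trace_mul_cycle, nonsing_inv_mul S hS, Matrix.one_mul,
    trace_transpose]
  ring

end LinearAlgebra

section Calculus

theorem gradient_apply_eq_fderiv_single {ι : Type*} [Fintype ι] [DecidableEq ι]
    (f : EuclideanSpace ℝ ι → ℝ) (x : EuclideanSpace ℝ ι) (i : ι) :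
    gradient f x i = fderiv ℝ f x (EuclideanSpace.single i 1) := by
  rw [gradient, ← InnerProductSpace.toDual_symm_apply, EuclideanSpace.inner_single_right]
  simp

theorem fderiv_apply_euclidean {ι H : Type*} [Fintype ι] [NormedAddCommGroup H]
    [NormedSpace ℝ H] {F : H → EuclideanSpace ℝ ι} {x : H} (hF : DifferentiableAt ℝ F x)
    (v : H) (i : ι) :
    fderiv ℝ F x v i = fderiv ℝ (fun y => F y i) x v := by
  change _ = fderiv ℝ ((fun f : EuclideanSpace ℝ ι => f i) ∘ F) x v
  rw [((PiLp.hasFDerivAt_apply 2 (F x) i).comp x hF.hasFDerivAt).fderiv]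
  rfl

variable {n : ℕ}

local notation "E" => EuclideanSpace ℝ (Fin n)

def dotCLM (w : Fin n → ℝ) : E →L[ℝ] ℝ :=
  ∑ j, w j • EuclideanSpace.proj j

theorem dotCLM_apply (w : Fin n → ℝ) (v : E) : dotCLM w v = w ⬝ᵥ toV v := by
  simp [dotCLM, dotProduct, toV]

theorem dotCLM_single (w : Fin n → ℝ) (j : Fin n) :
    dotCLM w (EuclideanSpace.single j 1) = w j := by
  simp [dotCLM]

theorem hasFDerivAt_coord_sub (mv : Fin n → ℝ) (j : Fin n) (x : E) :
    HasFDerivAt (fun y : E => y j - mv j) (EuclideanSpace.proj j : E →L[ℝ] ℝ) x :=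
  (EuclideanSpace.proj j : E →L[ℝ] ℝ).hasFDerivAt.sub_const (mv j)

theorem hasFDerivAt_mulVec_sub_apply {ι : Type*} (N : Matrix ι (Fin n) ℝ) (mv : Fin n → ℝ)
    (i : ι) (x : E) :
    HasFDerivAt (fun y : E => (N *ᵥ (toV y - mv)) i) (dotCLM (N i)) x := by
  have h := HasFDerivAt.fun_sum (u := Finset.univ) fun j _ =>
    (hasFDerivAt_coord_sub mv j x).const_mul (N i j)
  simpa [mulVec, dotProduct, toV, dotCLM] using h

theorem hasFDerivAt_quadForm {M : Matrix (Fin n) (Fin n) ℝ} (hM : M.IsSymm) (mv : Fin n → ℝ)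
    (x : E) :
    HasFDerivAt (fun y : E => (toV y - mv) ⬝ᵥ M *ᵥ (toV y - mv))
      (dotCLM ((2 : ℝ) • M *ᵥ (toV x - mv))) x := by
  refine (HasFDerivAt.fun_sum fun i _ =>
    (hasFDerivAt_coord_sub mv i x).mul (hasFDerivAt_mulVec_sub_apply M mv i x)).congr_fderiv ?_
  ext v
  have hsymm : (toV x - mv) ⬝ᵥ M *ᵥ toV v = (M *ᵥ (toV x - mv)) ⬝ᵥ toV v := by
    rw [dotProduct_mulVec, ← mulVec_transpose, hM.eq]
  simp only [FunLike.coe_sum, Finset.sum_apply, FunLike.coe_add,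
    Pi.add_apply, FunLike.coe_smul, Pi.smul_apply, smul_eq_mul, dotCLM_apply]
  change ∑ i, ((toV x - mv) i * (M *ᵥ toV v) i + (M *ᵥ (toV x - mv)) i * toV v i) = _
  rw [Finset.sum_add_distrib]
  change (toV x - mv) ⬝ᵥ M *ᵥ toV v + (M *ᵥ (toV x - mv)) ⬝ᵥ toV v = _
  rw [hsymm, smul_dotProduct, two_smul]

def gaussFun (c : ℝ) (M : Matrix (Fin n) (Fin n) ℝ) (mv : Fin n → ℝ) (y : E) : ℝ :=
  c * Real.exp (-(1 / 2) * ((toV y - mv) ⬝ᵥ M *ᵥ (toV y - mv)))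

variable {c : ℝ} {M : Matrix (Fin n) (Fin n) ℝ} {mv : Fin n → ℝ}

theorem hasFDerivAt_gaussFun (hM : M.IsSymm) (x : E) :
    HasFDerivAt (gaussFun c M mv) (dotCLM (-gaussFun c M mv x • M *ᵥ (toV x - mv))) x := by
  refine (((hasFDerivAt_quadForm hM mv x).const_mul (-(1 / 2))).exp.const_mul c).congr_fderiv
    ?_
  ext v
  simp only [_root_.smul_apply, _root_.neg_apply, neg_smul, dotCLM_apply, smul_dotProduct,
    neg_dotProduct, smul_eq_mul, gaussFun]
  ring

theorem fderiv_gaussFun_mul_mulVec_apply (hM : M.IsSymm) {ι : Type*} (N : Matrix ι (Fin n) ℝ)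
    (i : ι) (j : Fin n) (x : E) :
    fderiv ℝ (fun y => gaussFun c M mv y * (N *ᵥ (toV y - mv)) i) x (EuclideanSpace.single j 1)
      = gaussFun c M mv x * (N i j - (M *ᵥ (toV x - mv)) j * (N *ᵥ (toV x - mv)) i) := by
  rw [((hasFDerivAt_gaussFun hM x).fun_mul (hasFDerivAt_mulVec_sub_apply N mv i x)).fderiv]
  simp only [_root_.add_apply, _root_.smul_apply, dotCLM_single, smul_eq_mul,
    Pi.smul_apply]
  ring

theorem gradient_gaussFun (hM : M.IsSymm) :
    gradient (gaussFun c M mv)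
      = fun x => WithLp.toLp 2 fun i => gaussFun c M mv x * ((-M) *ᵥ (toV x - mv)) i := by
  funext x
  ext i
  rw [gradient_apply_eq_fderiv_single, (hasFDerivAt_gaussFun hM x).fderiv, dotCLM_single]
  simp [neg_mulVec]

theorem hess_gaussFun (hM : M.IsSymm) (x : E) :
    hess (gaussFun c M mv) x = gaussFun c M mv x •
      (vecMulVec (M *ᵥ (toV x - mv)) (M *ᵥ (toV x - mv)) - M) := by
  have hdiff : DifferentiableAt ℝ (gradient (gaussFun c M mv)) x := by
    rw [gradient_gaussFun hM, differentiableAt_euclidean]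
    exact fun i => ((hasFDerivAt_gaussFun hM x).mul
      (hasFDerivAt_mulVec_sub_apply (-M) mv i x)).differentiableAt
  ext i j
  rw [hess, of_apply, fderiv_apply_euclidean hdiff, gradient_gaussFun hM]
  refine (fderiv_gaussFun_mul_mulVec_apply hM (-M) i j x).trans ?_
  rw [Matrix.smul_apply, Matrix.sub_apply, vecMulVec_apply, Matrix.neg_apply, neg_mulVec,
    Pi.neg_apply, smul_eq_mul]
  ring

theorem dive_gaussFun_smul_mulVec (hM : M.IsSymm) (N : Matrix (Fin n) (Fin n) ℝ) (x : E) :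
    dive (fun y => gaussFun c M mv y • N *ᵥ (toV y - mv)) x
      = gaussFun c M mv x * (N.trace - (M *ᵥ (toV x - mv)) ⬝ᵥ N *ᵥ (toV x - mv)) := by
  simp only [dive, Pi.smul_apply, smul_eq_mul, fderiv_gaussFun_mul_mulVec_apply hM,
    ← Finset.mul_sum, Finset.sum_sub_distrib]
  rfl

theorem trace_mul_hess_gaussFun (hM : M.IsSymm) (Q : Matrix (Fin n) (Fin n) ℝ) (x : E) :
    (Q * hess (gaussFun c M mv) x).trace = gaussFun c M mv x *
      ((M *ᵥ (toV x - mv)) ⬝ᵥ Q *ᵥ (M *ᵥ (toV x - mv)) - (Q * M).trace) := by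
  rw [hess_gaussFun hM, Matrix.mul_smul, trace_smul, Matrix.mul_sub, trace_sub, mul_vecMulVec,
    trace_vecMulVec, dotProduct_comm, smul_eq_mul]

end Calculus

theorem stmt_15_general {n m : ℕ} (A Abar : Matrix (Fin n) (Fin n) ℝ)
    (B : Matrix (Fin n) (Fin m) ℝ)
    (P S : Matrix (Fin n) (Fin n) ℝ) (mv nv : Fin n → ℝ)
    (hS : S.PosDef) (hSsym : Sᵀ = S)
    (hLyap : (A - B * Bᵀ * P) * S + S * (A - B * Bᵀ * P)ᵀ + B * Bᵀ = 0)
    (hMean : (A + Abar - B * Bᵀ * P).mulVec mv + (B * Bᵀ).mulVec nv = 0)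
    (ρ : EuclideanSpace ℝ (Fin n) → ℝ)
    (hρ : ∀ x, ρ x = (2 * Real.pi) ^ (-(n : ℝ) / 2) * S.det ^ (-(1 : ℝ) / 2) *
      Real.exp (-(1/2) * ((toV x - mv) ⬝ᵥ S⁻¹.mulVec (toV x - mv)))) :
    ∀ x, dive (fun y => ρ y •
        (A.mulVec (toV y) + Abar.mulVec mv
          + (B * Bᵀ).mulVec (-(P.mulVec (toV y)) + nv))) x
      - (1/2) * (B * Bᵀ * hess ρ x).trace = 0 := by
  obtain ⟨c, rfl⟩ : ∃ c, ρ = gaussFun c S⁻¹ mv := ⟨_, funext hρ⟩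
  intro x
  have hdet : IsUnit S.det := isUnit_iff_ne_zero.mpr hS.det_pos.ne'
  have hM : S⁻¹.IsSymm := IsSymm.inv hSsym
  have hSw : S *ᵥ (S⁻¹ *ᵥ (toV x - mv)) = toV x - mv := by
    rw [mulVec_mulVec, mul_nonsing_inv S hdet, one_mulVec]
  simp only [drift_eq_mulVec_sub A Abar (B * Bᵀ) P mv nv _ hMean]
  rw [dive_gaussFun_smul_mulVec hM, trace_mul_hess_gaussFun hM,
    trace_mul_inv_eq_of_lyapunov hdet hLyap, dotProduct_mulVec_eq_of_lyapunov hSsym hLyap, hSw]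
  ring

/-- Let `λ(x) = −½xᵀΠx + nᵀx` with `Π` symmetric (so `∇λ(x) = −Πx + n`).
If `Π` satisfies `(A−BBᵀΠ)Σ + Σ(A−BBᵀΠ)ᵀ + BBᵀ = 0` and
`(A+Ā−BBᵀΠ)m + BBᵀn = 0`, then the Gaussian density `ρ* = N(m,Σ)` is a stationary
solution of the Fokker–Planck equation
`∇·((Ax + Ām + BBᵀ∇λ)ρ*) − ½ tr(BBᵀ∇²ρ*) = 0`. -/
theorem stmt_15 {n m : ℕ} (A Abar : Matrix (Fin n) (Fin n) ℝ)
    (B : Matrix (Fin n) (Fin m) ℝ)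
    (P S : Matrix (Fin n) (Fin n) ℝ) (mv nv : Fin n → ℝ)
    (hPsym : Pᵀ = P) (hS : S.PosDef) (hSsym : Sᵀ = S)
    (hLyap : (A - B * Bᵀ * P) * S + S * (A - B * Bᵀ * P)ᵀ + B * Bᵀ = 0)
    (hMean : (A + Abar - B * Bᵀ * P).mulVec mv + (B * Bᵀ).mulVec nv = 0)
    (ρ : EuclideanSpace ℝ (Fin n) → ℝ)
    (hρ : ∀ x, ρ x = (2 * Real.pi) ^ (-(n : ℝ) / 2) * S.det ^ (-(1 : ℝ) / 2) *
      Real.exp (-(1/2) * ((toV x - mv) ⬝ᵥ S⁻¹.mulVec (toV x - mv)))) :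
    ∀ x, dive (fun y => ρ y •
        (A.mulVec (toV y) + Abar.mulVec mv
          + (B * Bᵀ).mulVec (-(P.mulVec (toV y)) + nv))) x
      - (1/2) * (B * Bᵀ * hess ρ x).trace = 0 :=
  stmt_15_general A Abar B P S mv nv hS hSsym hLyap hMean ρ hρ
end
end
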